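/- arXiv:2309.00360 — 2 statements merged into one kernel-verified Lean document; each statement's English description precedes it below -/
import Mathlib

section
/- Let A and B be two intersecting biaffine lines of a linear space, and let L be a projective line. Then the map L → B sending a point p ∈ L to the unique intersection point of P(A, p) with B is a bijection, where P(A, p) denotes the unique line through p parallel to A. -/
/-- A linear space: a point set `M` together with a collection of lines (subsets of `M`)
such that every line has at least 3 points, any two distinct points lie on exactly one
common line, and every point lies on at least 3 lines. -/
structure LinearSpace (M : Type*) where
  lines : Set (Set M)
  exists_three_points : ∀ L ∈ lines, ∃ a b c : M,
    a ∈ L ∧ b ∈ L ∧ c ∈ L ∧ a ≠ b ∧ a ≠ c ∧ b ≠ c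
  join_unique : ∀ p q : M, p ≠ q → ∃! L, L ∈ lines ∧ p ∈ L ∧ q ∈ L
  exists_three_lines : ∀ p : M, ∃ L₁ L₂ L₃, L₁ ∈ lines ∧ L₂ ∈ lines ∧ L₃ ∈ lines ∧
    p ∈ L₁ ∧ p ∈ L₂ ∧ p ∈ L₃ ∧ L₁ ≠ L₂ ∧ L₁ ≠ L₃ ∧ L₂ ≠ L₃

namespace LinearSpace

variable {M : Type*}

/-- Two lines are parallel if they are equal or disjoint. -/
def Parallel (L K : Set M) : Prop := L = K ∨ L ∩ K = ∅

/-- A line `L` is affine if for every point `p ∉ L` there is exactly one line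
through `p` disjoint from `L`. -/
def IsAffine (S : LinearSpace M) (L : Set M) : Prop :=
  L ∈ S.lines ∧ ∀ p ∉ L, ∃! K, K ∈ S.lines ∧ p ∈ K ∧ K ∩ L = ∅

/-- A line is projective if it meets every other line. -/
def IsProjective (S : LinearSpace M) (L : Set M) : Prop :=
  L ∈ S.lines ∧ ∀ K ∈ S.lines, K ≠ L → (L ∩ K).Nonempty

/-- An affine line is biaffine if every line parallel to it is also affine. -/
def IsBiaffine (S : LinearSpace M) (L : Set M) : Prop :=
  S.IsAffine L ∧ ∀ K ∈ S.lines, Parallel K L → S.IsAffine K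

end LinearSpace

open LinearSpace

/-!
The lines parallel to the affine line `A` partition the points, and `f` sends `p` to the point
where the class of `p` meets `B`. A projective line meets every line, so it is parallel to no
line but itself; and `L ≠ A`, since through a point of `B \ A` there is a line disjoint from `A`.
Hence `L` meets every parallel class exactly once, and so does `B`, which meets `A` without
being equal to it. So `f` is the composite of two bijections through the set of classes.
-/

namespace LinearSpace

variable {M : Type*} {S : LinearSpace M} {A K K' L : Set M} {p : M}

theorem Parallel.symm (h : Parallel K L) : Parallel L K := by
  rcases h with h | h
  · exact .inl h.symm
  · exact .inr (Set.inter_comm L K ▸ h)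

theorem Parallel.eq_of_inter_nonempty (h : Parallel K L) (hKL : (K ∩ L).Nonempty) : K = L :=
  h.resolve_right hKL.ne_empty

theorem inter_subsingleton (hK : K ∈ S.lines) (hL : L ∈ S.lines) (hKL : K ≠ L) :
    (K ∩ L).Subsingleton := by
  intro p hp q hq
  by_contra hpq
  obtain ⟨J, -, hJ⟩ := S.join_unique p q hpq
  exact hKL ((hJ K ⟨hK, hp.1, hq.1⟩).trans (hJ L ⟨hL, hp.2, hq.2⟩).symm)

theorem exists_mem_notMem_of_ne (hK : K ∈ S.lines) (hL : L ∈ S.lines) (hKL : K ≠ L) :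
    ∃ p ∈ L, p ∉ K := by
  by_contra! hLK
  obtain ⟨a, b, -, ha, hb, -, hab, -, -⟩ := S.exists_three_points L hL
  exact hab (inter_subsingleton hK hL hKL ⟨hLK a ha, ha⟩ ⟨hLK b hb, hb⟩)

theorem IsAffine.eq_of_parallel (hA : S.IsAffine A) (hK : K ∈ S.lines) (hK' : K' ∈ S.lines)
    (hKA : Parallel K A) (hK'A : Parallel K' A) (hpK : p ∈ K) (hpK' : p ∈ K') : K = K' := by
  by_cases hpA : p ∈ A
  · rw [hKA.eq_of_inter_nonempty ⟨p, hpK, hpA⟩, hK'A.eq_of_inter_nonempty ⟨p, hpK', hpA⟩]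
  · have hdisjoint {J : Set M} (hJA : Parallel J A) (hpJ : p ∈ J) : J ∩ A = ∅ :=
      hJA.resolve_left (by rintro rfl; exact hpA hpJ)
    exact (hA.2 p hpA).unique ⟨hK, hpK, hdisjoint hKA hpK⟩ ⟨hK', hpK', hdisjoint hK'A hpK'⟩

theorem IsAffine.not_isProjective (hA : S.IsAffine A) (hpA : p ∉ A) : ¬ S.IsProjective A := by
  intro hAproj
  obtain ⟨K, ⟨hK, hpK, hKA⟩, -⟩ := hA.2 p hpA
  have hKA_ne : K ≠ A := by rintro rfl; exact hpA hpK
  exact (hAproj.2 K hK hKA_ne).ne_empty (Set.inter_comm A K ▸ hKA)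

theorem IsProjective.eq_of_parallel (hL : S.IsProjective L) (hK : K ∈ S.lines)
    (hKL : Parallel K L) : K = L := by
  by_contra hne
  exact (hL.2 K hK hne).ne_empty (Set.inter_comm L K ▸ hKL.resolve_left hne)

theorem IsProjective.ne_of_parallel (hL : S.IsProjective L) (hA : A ∈ S.lines) (hAL : A ≠ L)
    (hKA : Parallel K A) : K ≠ L := by
  rintro rfl
  exact hAL (hL.eq_of_parallel hA hKA.symm)

end LinearSpace

/-- For two intersecting biaffine lines `A`, `B` and a projective line `L`, the map
`L → B` sending `p ∈ L` to the unique intersection point of `P (A, p)` with `B`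
is a bijection. Here `P` is the map assigning to an affine line and a point the
unique parallel line through that point. -/
theorem projective_to_biaffine_bijective {M : Type*} (S : LinearSpace M)
    (A B L : Set M) (hA : S.IsBiaffine A) (hB : S.IsBiaffine B) (hAB : A ≠ B)
    (hmeet : (A ∩ B).Nonempty) (hL : S.IsProjective L)
    (P : Set M → M → Set M)
    (hP : ∀ L' : Set M, ∀ p : M, S.IsAffine L' →
      P L' p ∈ S.lines ∧ p ∈ P L' p ∧ Parallel (P L' p) L')
    (f : L → B)
    (hf : ∀ p : L, (f p : M) ∈ P A (p : M)) :
    Function.Bijective f := by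
  have hAaff : S.IsAffine A := hA.1
  have hPA (p : M) : P A p ∈ S.lines ∧ p ∈ P A p ∧ Parallel (P A p) A := hP A p hAaff
  have hPA_eq {p q : M} (hpq : (P A p ∩ P A q).Nonempty) : P A p = P A q := by
    obtain ⟨x, hxp, hxq⟩ := hpq
    exact hAaff.eq_of_parallel (hPA p).1 (hPA q).1 (hPA p).2.2 (hPA q).2.2 hxp hxq
  obtain ⟨c, -, hcA⟩ := exists_mem_notMem_of_ne hAaff.1 hB.1.1 hAB
  have hAL : A ≠ L := by rintro rfl; exact hAaff.not_isProjective hcA hL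
  have hPL (p : M) : P A p ≠ L := hL.ne_of_parallel hAaff.1 hAL (hPA p).2.2
  refine ⟨fun p q hpq => ?_, fun b => ?_⟩
  · have hPpq : P A p = P A q := hPA_eq ⟨f p, hf p, hpq ▸ hf q⟩
    exact Subtype.ext <| inter_subsingleton (hPA p).1 hL.1 (hPL p)
      ⟨(hPA p).2.1, p.2⟩ ⟨hPpq ▸ (hPA q).2.1, q.2⟩
  · obtain ⟨p, hpL, hpPb⟩ := hL.2 _ (hPA b).1 (hPL b)
    have hPpb : P A p = P A b := hPA_eq ⟨p, (hPA p).2.1, hpPb⟩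
    have hPB : P A b ≠ B := fun h =>
      hAB ((h ▸ (hPA b).2.2).eq_of_inter_nonempty (Set.inter_comm A B ▸ hmeet)).symm
    exact ⟨⟨p, hpL⟩, Subtype.ext <| inter_subsingleton (hPA b).1 hB.1.1 hPB
      ⟨hPpb ▸ hf ⟨p, hpL⟩, (f ⟨p, hpL⟩).2⟩ ⟨(hPA b).2.1, b.2⟩⟩
end

section
/- Let A be an affine line of a linear space, and suppose A is finite with exactly q points. Then every point x ∉ A lies on exactly q + 1 lines: the q lines joining x to the points of A, together with the unique line through x disjoint from A. -/
namespace LinearSpace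

variable {M : Type*} (S : LinearSpace M)

theorem eq_of_mem_of_mem {L K : Set M} (hL : L ∈ S.lines) (hK : K ∈ S.lines) {p q : M}
    (hpq : p ≠ q) (hpL : p ∈ L) (hqL : q ∈ L) (hpK : p ∈ K) (hqK : q ∈ K) : L = K := by
  obtain ⟨N, -, hN⟩ := S.join_unique p q hpq
  rw [hN L ⟨hL, hpL, hqL⟩, hN K ⟨hK, hpK, hqK⟩]

open Classical in
/-- Junk value `∅` when `p = q`. -/
noncomputable def join (p q : M) : Set M :=
  if h : p ≠ q then (S.join_unique p q h).choose else ∅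

variable {S}

theorem join_spec {p q : M} (hpq : p ≠ q) :
    S.join p q ∈ S.lines ∧ p ∈ S.join p q ∧ q ∈ S.join p q := by
  rw [join, dif_pos hpq]
  exact (S.join_unique p q hpq).choose_spec.1

theorem eq_join {p q : M} (hpq : p ≠ q) {L : Set M} (hL : L ∈ S.lines) (hpL : p ∈ L)
    (hqL : q ∈ L) : L = S.join p q :=
  let ⟨hJ, hpJ, hqJ⟩ := join_spec hpq
  S.eq_of_mem_of_mem hL hJ hpq hpL hqL hpJ hqJ

def pencil (S : LinearSpace M) (x : M) : Set (Set M) := {K | K ∈ S.lines ∧ x ∈ K}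

variable {L : Set M} {x : M}

theorem join_mapsTo_pencil (hx : x ∉ L) {a : M} (ha : a ∈ L) :
    S.join x a ∈ S.pencil x ∧ (S.join x a ∩ L).Nonempty :=
  have hxa : x ≠ a := (ne_of_mem_of_not_mem ha hx).symm
  ⟨⟨(join_spec hxa).1, (join_spec hxa).2.1⟩, a, (join_spec hxa).2.2, ha⟩

theorem injOn_join (hL : L ∈ S.lines) (hx : x ∉ L) : Set.InjOn (S.join x) L := by
  intro a ha b hb hab
  by_contra hne
  have hxa : x ≠ a := (ne_of_mem_of_not_mem ha hx).symm
  have hxb : x ≠ b := (ne_of_mem_of_not_mem hb hx).symm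
  obtain ⟨hJ, hxJ, haJ⟩ := join_spec hxa
  have hbJ : b ∈ S.join x a := hab ▸ (join_spec hxb).2.2
  exact hx (S.eq_of_mem_of_mem hL hJ hne ha hb haJ hbJ ▸ hxJ)

theorem image_join_eq (hx : x ∉ L) :
    S.join x '' L = {K ∈ S.pencil x | (K ∩ L).Nonempty} := by
  ext K
  constructor
  · rintro ⟨a, ha, rfl⟩
    exact join_mapsTo_pencil hx ha
  · rintro ⟨⟨hK, hxK⟩, a, haK, ha⟩
    exact ⟨a, ha, (eq_join (ne_of_mem_of_not_mem ha hx).symm hK hxK haK).symm⟩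

theorem ncard_pencil_meeting (hL : L ∈ S.lines) (hx : x ∉ L) :
    {K ∈ S.pencil x | (K ∩ L).Nonempty}.ncard = L.ncard := by
  rw [← image_join_eq hx, (injOn_join hL hx).ncard_image]

theorem pencil_eq_insert_parallel {K₀ : Set M}
    (hK₀ : K₀ ∈ S.lines ∧ x ∈ K₀ ∧ K₀ ∩ L = ∅)
    (huniq : ∀ K, K ∈ S.lines ∧ x ∈ K ∧ K ∩ L = ∅ → K = K₀) :
    S.pencil x = insert K₀ {K ∈ S.pencil x | (K ∩ L).Nonempty} := by
  ext K
  constructor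
  · intro hKx
    by_cases hKL : K ∩ L = ∅
    · exact Or.inl (huniq K ⟨hKx.1, hKx.2, hKL⟩)
    · exact Or.inr ⟨hKx, Set.nonempty_iff_ne_empty.2 hKL⟩
  · rintro (rfl | ⟨hKx, -⟩)
    exacts [⟨hK₀.1, hK₀.2.1⟩, hKx]

end LinearSpace

open LinearSpace

/-- If `A` is an affine line with exactly `q` points, then every point `x ∉ A` lies on
exactly `q + 1` lines. -/
theorem pencil_card_of_affine_line {M : Type*} (S : LinearSpace M)
    (A : Set M) (hA : S.IsAffine A) (q : ℕ) (hfin : A.Finite) (hcard : A.ncard = q) :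
    ∀ x ∉ A, {K : Set M | K ∈ S.lines ∧ x ∈ K}.ncard = q + 1 := by
  intro x hx
  obtain ⟨hAl, hpar⟩ := hA
  obtain ⟨K₀, hK₀, huniq⟩ := hpar x hx
  have hK₀_notMem : K₀ ∉ {K ∈ S.pencil x | (K ∩ A).Nonempty} := fun h =>
    Set.nonempty_iff_ne_empty.1 h.2 hK₀.2.2
  have hmeet_finite : {K ∈ S.pencil x | (K ∩ A).Nonempty}.Finite :=
    image_join_eq hx ▸ hfin.image _
  change (S.pencil x).ncard = q + 1
  rw [pencil_eq_insert_parallel hK₀ huniq, Set.ncard_insert_of_notMem hK₀_notMem hmeet_finite,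
    ncard_pencil_meeting hAl hx, hcard]
end
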